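/- Let p be a real polynomial with exactly two distinct zeroes, both real, of degree n ≥ 2. Then for every real κ ≤ (n−1)/n, the polynomial F_κ[p] = p·p'' − κ(p')² has only real zeroes; and for κ > (n−1)/n it has exactly 2 non-real zeroes (counted with multiplicity). -/

import Mathlib

/-!
Since `p'/p = n₁/(x - λ₁) + n₂/(x - λ₂)`, one has
`F_κ[p]/p² = (p'/p)' + (1 - κ)(p'/p)²
           = (1 - κ)(p'/p)² - n₁/(x - λ₁)² - n₂/(x - λ₂)²`.
Clearing denominators and completing the square gives, with `t = (1 - κ)n - 1`,
`n (x - λ₁)² (x - λ₂)² F_κ[p] = p² (t (n x - n₁λ₂ - n₂λ₁)² - D)`, `D = n₁n₂(λ₂ - λ₁)²`.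
So the non-real zeroes of `F_κ[p]` are those of the quadratic factor, and for `D > 0` the
solutions `w` of `t w² = D` are real when `t ≥ 0`, while for `t < 0` both are non-real.
-/

open Polynomial

section CommRing

variable {R : Type*} [CommRing R]

noncomputable def fKappa (κ : R) (p : R[X]) : R[X] :=
  p * derivative (derivative p) - C κ * derivative p ^ 2

theorem derivative_X_sub_C_pow_mul (c : R) (m : ℕ) :
    derivative ((X - C c) ^ m) * (X - C c) = (m : R[X]) * (X - C c) ^ m := by
  rw [derivative_X_sub_C_pow, map_natCast]
  cases m with
  | zero => simp
  | succ k => rw [Nat.add_sub_cancel, mul_assoc, ← pow_succ]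

theorem derivative_mul_X_sub_C_mul_X_sub_C (a l₁ l₂ : R) (n₁ n₂ : ℕ) :
    derivative (C a * (X - C l₁) ^ n₁ * (X - C l₂) ^ n₂) * ((X - C l₁) * (X - C l₂)) =
      C a * (X - C l₁) ^ n₁ * (X - C l₂) ^ n₂ *
        ((n₁ : R[X]) * (X - C l₂) + (n₂ : R[X]) * (X - C l₁)) := by
  simp only [derivative_mul, derivative_C, zero_mul, zero_add]
  linear_combination
    (C a * (X - C l₂) ^ n₂ * (X - C l₂)) * derivative_X_sub_C_pow_mul l₁ n₁ +
      (C a * (X - C l₁) ^ n₁ * (X - C l₁)) * derivative_X_sub_C_pow_mul l₂ n₂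

theorem derivative_derivative_mul_X_sub_C_mul_X_sub_C_sq (a l₁ l₂ : R) (n₁ n₂ : ℕ) :
    derivative (derivative (C a * (X - C l₁) ^ n₁ * (X - C l₂) ^ n₂)) *
        ((X - C l₁) * (X - C l₂)) ^ 2 =
      C a * (X - C l₁) ^ n₁ * (X - C l₂) ^ n₂ *
        (((n₁ : R[X]) * (X - C l₂) + (n₂ : R[X]) * (X - C l₁)) ^ 2 -
          ((n₁ : R[X]) * (X - C l₂) ^ 2 + (n₂ : R[X]) * (X - C l₁) ^ 2)) := by
  have h₁ := derivative_mul_X_sub_C_mul_X_sub_C a l₁ l₂ n₁ n₂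
  generalize C a * (X - C l₁) ^ n₁ * (X - C l₂) ^ n₂ = p at h₁ ⊢
  have h₂ := congrArg derivative h₁
  simp only [derivative_mul, derivative_add, derivative_sub, derivative_X, derivative_C,
    derivative_natCast] at h₂
  linear_combination ((X - C l₁) * (X - C l₂)) * h₂ +
    ((n₁ : R[X]) * (X - C l₂) + (n₂ : R[X]) * (X - C l₁) - (X - C l₁) - (X - C l₂)) * h₁

theorem fKappa_mul_eq (a l₁ l₂ κ : R) (n₁ n₂ : ℕ) :
    fKappa κ (C a * (X - C l₁) ^ n₁ * (X - C l₂) ^ n₂) *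
        (C ((n₁ + n₂ : ℕ) : R) * (X - C l₁) ^ 2 * (X - C l₂) ^ 2) =
      (C a * (X - C l₁) ^ n₁ * (X - C l₂) ^ n₂) ^ 2 *
        (C ((1 - κ) * (n₁ + n₂ : ℕ) - 1) *
            (C ((n₁ + n₂ : ℕ) : R) * X - C (n₁ * l₂ + n₂ * l₁)) ^ 2 -
          C (n₁ * n₂ * (l₂ - l₁) ^ 2)) := by
  have h₁ := derivative_mul_X_sub_C_mul_X_sub_C a l₁ l₂ n₁ n₂
  have h₂ := derivative_derivative_mul_X_sub_C_mul_X_sub_C_sq a l₁ l₂ n₁ n₂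
  generalize C a * (X - C l₁) ^ n₁ * (X - C l₂) ^ n₂ = p at h₁ h₂ ⊢
  simp only [fKappa, map_sub, map_mul, map_add, map_pow, map_one, map_natCast, Nat.cast_add]
  linear_combination ((n₁ : R[X]) + n₂) * p * h₂ - ((n₁ : R[X]) + n₂) * C κ *
    (derivative p * ((X - C l₁) * (X - C l₂)) +
      p * ((n₁ : R[X]) * (X - C l₂) + (n₂ : R[X]) * (X - C l₁))) * h₁

end CommRing

theorem natDegree_C_mul_sq_sub_C {R : Type*} [Ring R] [NoZeroDivisors R] {t c m D : R}
    (ht : t ≠ 0) (hc : c ≠ 0) :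
    (C t * (C c * X - C m) ^ 2 - C D).natDegree = 2 := by
  rw [natDegree_sub_C, natDegree_C_mul ht, natDegree_pow, sub_eq_add_neg, ← C_neg,
    natDegree_linear hc]

theorem Complex.im_eq_zero_iff_of_ofReal_mul_sq_eq {t D : ℝ} (hD : 0 < D) {w : ℂ}
    (h : (t : ℂ) * w ^ 2 = D) : w.im = 0 ↔ 0 ≤ t := by
  have hre := congrArg Complex.re h
  have him := congrArg Complex.im h
  simp only [sq, Complex.mul_re, Complex.mul_im, Complex.ofReal_re, Complex.ofReal_im,
    zero_mul, sub_zero, add_zero] at hre him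
  constructor
  · intro hy
    rw [hy] at hre
    nlinarith [mul_self_nonneg w.re]
  · intro ht
    by_contra hy
    have hre0 : t * w.re = 0 := by
      have : (t * w.re) * w.im = 0 := by linarith
      exact (mul_eq_zero.1 this).resolve_right hy
    have : t * w.im * w.im = -D := by linear_combination w.re * hre0 - hre
    nlinarith [mul_nonneg ht (mul_self_nonneg w.im)]

theorem im_eq_zero_iff_of_isRoot_map_C_mul_sq_sub_C {t c m D : ℝ} (hc : c ≠ 0) (hD : 0 < D)
    {z : ℂ}
    (hz : ((C t * (C c * X - C m) ^ 2 - C D).map (algebraMap ℝ ℂ)).IsRoot z) :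
    z.im = 0 ↔ 0 ≤ t := by
  have h : (t : ℂ) * (c * z - m) ^ 2 = D := by simpa [sub_eq_zero] using hz
  rw [← Complex.im_eq_zero_iff_of_ofReal_mul_sq_eq hD h]
  simp [hc]

theorem im_eq_zero_of_isRoot_map_C_mul_X_sub_C_pow_mul_pow {a l₁ l₂ : ℝ} (ha : a ≠ 0)
    {n₁ n₂ : ℕ} {z : ℂ}
    (hz : ((C a * (X - C l₁) ^ n₁ * (X - C l₂) ^ n₂).map (algebraMap ℝ ℂ)).IsRoot z) :
    z.im = 0 := by
  obtain ⟨rfl, -⟩ | ⟨rfl, -⟩ : (z = l₁ ∧ n₁ ≠ 0) ∨ (z = l₂ ∧ n₂ ≠ 0) := by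
    simpa [sub_eq_zero, ha] using hz
  all_goals simp

theorem roots_filter_im_ne_zero_eq_zero {g : ℂ[X]} (hg : ∀ z, g.IsRoot z → z.im = 0) :
    g.roots.filter (fun z => z.im ≠ 0) = 0 :=
  Multiset.filter_eq_nil.2 fun z hz => not_not.2 (hg z (isRoot_of_mem_roots hz))

theorem roots_filter_im_ne_zero_eq_of_mul_eq {f g h k : ℂ[X]} (hfg : f * g = h * k)
    (hhk : h * k ≠ 0) (hg : ∀ z, g.IsRoot z → z.im = 0) (hh : ∀ z, h.IsRoot z → z.im = 0) :
    f.roots.filter (fun z => z.im ≠ 0) = k.roots.filter (fun z => z.im ≠ 0) := by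
  have := congrArg (fun q => q.roots.filter (fun z : ℂ => z.im ≠ 0)) hfg
  simpa only [roots_mul (hfg ▸ hhk), roots_mul hhk, Multiset.filter_add,
    roots_filter_im_ne_zero_eq_zero hg, roots_filter_im_ne_zero_eq_zero hh, add_zero,
    zero_add] using this

theorem map_fKappa_mul_eq (a l₁ l₂ κ : ℝ) (n₁ n₂ : ℕ) :
    (fKappa κ (C a * (X - C l₁) ^ n₁ * (X - C l₂) ^ n₂)).map (algebraMap ℝ ℂ) *
        (C ((n₁ + n₂ : ℕ) : ℝ) * (X - C l₁) ^ 2 * (X - C l₂) ^ 2).map (algebraMap ℝ ℂ) =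
      ((C a * (X - C l₁) ^ n₁ * (X - C l₂) ^ n₂).map (algebraMap ℝ ℂ)) ^ 2 *
        (C ((1 - κ) * (n₁ + n₂ : ℕ) - 1) *
            (C ((n₁ + n₂ : ℕ) : ℝ) * X - C (n₁ * l₂ + n₂ * l₁)) ^ 2 -
          C (n₁ * n₂ * (l₂ - l₁) ^ 2)).map (algebraMap ℝ ℂ) := by
  rw [← Polynomial.map_mul, ← Polynomial.map_pow, ← Polynomial.map_mul, fKappa_mul_eq]

section TwoRoots

variable {a l₁ l₂ κ : ℝ} {n₁ n₂ : ℕ}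

theorem im_eq_zero_of_isRoot_map_fKappa (ha : a ≠ 0)
    (hD : (0 : ℝ) < n₁ * n₂ * (l₂ - l₁) ^ 2) (ht : 0 ≤ (1 - κ) * (n₁ + n₂ : ℕ) - 1) {z : ℂ}
    (hz : ((fKappa κ (C a * (X - C l₁) ^ n₁ * (X - C l₂) ^ n₂)).map
      (algebraMap ℝ ℂ)).IsRoot z) :
    z.im = 0 := by
  have key := congrArg (eval z) (map_fKappa_mul_eq a l₁ l₂ κ n₁ n₂)
  rw [eval_mul, eval_mul, hz.eq_zero, zero_mul, zero_eq_mul, eval_pow,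
    pow_eq_zero_iff two_ne_zero] at key
  rcases key with hp | hq
  · exact im_eq_zero_of_isRoot_map_C_mul_X_sub_C_pow_mul_pow ha hp
  · have hN : ((n₁ + n₂ : ℕ) : ℝ) ≠ 0 :=
      Nat.cast_ne_zero.2 fun h => by simp [Nat.add_eq_zero_iff.1 h] at hD
    exact (im_eq_zero_iff_of_isRoot_map_C_mul_sq_sub_C hN hD hq).2 ht

theorem card_roots_filter_im_ne_zero_map_fKappa (ha : a ≠ 0)
    (hD : (0 : ℝ) < n₁ * n₂ * (l₂ - l₁) ^ 2) (ht : (1 - κ) * (n₁ + n₂ : ℕ) - 1 < 0) :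
    (((fKappa κ (C a * (X - C l₁) ^ n₁ * (X - C l₂) ^ n₂)).map
      (algebraMap ℝ ℂ)).roots.filter (fun z => z.im ≠ 0)).card = 2 := by
  have hN : ((n₁ + n₂ : ℕ) : ℝ) ≠ 0 :=
    Nat.cast_ne_zero.2 fun h => by simp [Nat.add_eq_zero_iff.1 h] at hD
  have hq := natDegree_C_mul_sq_sub_C (m := (n₁ * l₂ + n₂ * l₁ : ℝ))
    (D := (n₁ * n₂ * (l₂ - l₁) ^ 2 : ℝ)) ht.ne hN
  have hp₀ : C a * (X - C l₁) ^ n₁ * (X - C l₂) ^ n₂ ≠ 0 := by simp [ha, X_sub_C_ne_zero]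
  have hp_real : ∀ z,
      (((C a * (X - C l₁) ^ n₁ * (X - C l₂) ^ n₂).map (algebraMap ℝ ℂ)) ^ 2).IsRoot z →
        z.im = 0 := fun _ hz => by
    rw [IsRoot, eval_pow, pow_eq_zero_iff two_ne_zero] at hz
    exact im_eq_zero_of_isRoot_map_C_mul_X_sub_C_pow_mul_pow ha hz
  rw [roots_filter_im_ne_zero_eq_of_mul_eq (map_fKappa_mul_eq a l₁ l₂ κ n₁ n₂)
      (mul_ne_zero (pow_ne_zero 2 (map_ne_zero hp₀))
        (map_ne_zero (ne_zero_of_natDegree_gt (hq ▸ two_pos))))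
      (fun _ hz => im_eq_zero_of_isRoot_map_C_mul_X_sub_C_pow_mul_pow hN hz) hp_real,
    Multiset.filter_eq_self.2 fun _ hz =>
      (im_eq_zero_iff_of_isRoot_map_C_mul_sq_sub_C hN hD (isRoot_of_mem_roots hz)).not.2
        ht.not_ge,
    IsAlgClosed.card_roots_eq_natDegree, natDegree_map, hq]

end TwoRoots

open scoped Classical in
theorem two_distinct_roots_F_kappa_general (a₀ l₁ l₂ : ℝ) (ha : a₀ ≠ 0) (hl : l₁ < l₂)
    (n₁ n₂ n : ℕ) (hn₁ : 1 ≤ n₁) (hn₂ : 1 ≤ n₂) (hn : n₁ + n₂ = n)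
    (p : ℝ[X]) (hp : p = C a₀ * (X - C l₁) ^ n₁ * (X - C l₂) ^ n₂) (κ : ℝ) :
    (κ ≤ ((n : ℝ) - 1) / n →
      ∀ z : ℂ, ((p * derivative (derivative p) - C κ * (derivative p) ^ 2).map
          (algebraMap ℝ ℂ)).IsRoot z → z.im = 0) ∧
    (((n : ℝ) - 1) / n < κ →
      Multiset.card
        (((p * derivative (derivative p) - C κ * (derivative p) ^ 2).map
            (algebraMap ℝ ℂ)).roots.filter (fun z => z.im ≠ 0)) = 2) := by
  subst hn hp
  have hD : (0 : ℝ) < n₁ * n₂ * (l₂ - l₁) ^ 2 := by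
    have : (0 : ℝ) < n₁ := Nat.cast_pos.2 hn₁
    have : (0 : ℝ) < n₂ := Nat.cast_pos.2 hn₂
    have : (0 : ℝ) < l₂ - l₁ := sub_pos.2 hl
    positivity
  have ht : κ ≤ ((n₁ + n₂ : ℕ) - 1) / (n₁ + n₂ : ℕ) ↔
      0 ≤ (1 - κ) * (n₁ + n₂ : ℕ) - 1 := by
    rw [le_div_iff₀ (Nat.cast_pos.2 (by omega))]
    constructor <;> intro <;> linarith
  exact ⟨fun hκ _ => im_eq_zero_of_isRoot_map_fKappa ha hD (ht.1 hκ),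
    fun hκ => card_roots_filter_im_ne_zero_map_fKappa ha hD
      ((lt_iff_lt_of_le_iff_le ht).1 hκ)⟩

open scoped Classical in
/-- Let `p` be a real polynomial of degree `n ≥ 2` with exactly two distinct
(real) zeroes. Then for `κ ≤ (n−1)/n` the polynomial `F_κ[p] = p·p'' − κ(p')²`
has only real zeroes, while for `κ > (n−1)/n` it has exactly 2 non-real zeroes
counted with multiplicity. -/
theorem two_distinct_roots_F_kappa (a₀ l₁ l₂ : ℝ) (ha : a₀ ≠ 0) (hl : l₁ < l₂)
    (n₁ n₂ n : ℕ) (hn₁ : 1 ≤ n₁) (hn₂ : 1 ≤ n₂) (hn : n₁ + n₂ = n) (hn2 : 2 ≤ n)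
    (p : ℝ[X]) (hp : p = C a₀ * (X - C l₁) ^ n₁ * (X - C l₂) ^ n₂) (κ : ℝ) :
    (κ ≤ ((n : ℝ) - 1) / n →
      ∀ z : ℂ, ((p * derivative (derivative p) - C κ * (derivative p) ^ 2).map
          (algebraMap ℝ ℂ)).IsRoot z → z.im = 0) ∧
    (((n : ℝ) - 1) / n < κ →
      Multiset.card
        (((p * derivative (derivative p) - C κ * (derivative p) ^ 2).map
            (algebraMap ℝ ℂ)).roots.filter (fun z => z.im ≠ 0)) = 2) :=
  two_distinct_roots_F_kappa_general a₀ l₁ l₂ ha hl n₁ n₂ n hn₁ hn₂ hn p hp κ
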